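/- The function r ↦ log(cosh r)/r² is antitone (monotone nonincreasing) on (0, ∞). Consequently, for 0 < δ ≤ r, one has log(cosh r)/log(cosh δ) ≤ r²/δ². -/

import Mathlib

open Real

private lemma hasDerivAt_logcosh (x : ℝ) :
    HasDerivAt (fun x : ℝ => Real.log (Real.cosh x)) ((Real.cosh x)⁻¹ * Real.sinh x) x :=
  (Real.hasDerivAt_log (Real.cosh_pos x).ne').comp x (Real.hasDerivAt_cosh x)

private lemma hasDerivAt_g (x : ℝ) :
    HasDerivAt (fun x : ℝ => 2 * Real.log (Real.cosh x) - x * Real.sinh x / Real.cosh x)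
      ((Real.sinh x * Real.cosh x - x) / Real.cosh x ^ 2) x := by
  have h1 := (hasDerivAt_logcosh x).const_mul 2
  have h2 : HasDerivAt (fun x : ℝ => x * Real.sinh x)
      (1 * Real.sinh x + x * Real.cosh x) x :=
    (hasDerivAt_id x).mul (Real.hasDerivAt_sinh x)
  have h3 := h2.div (Real.hasDerivAt_cosh x) (Real.cosh_pos x).ne'
  have h : HasDerivAt (fun x : ℝ => 2 * Real.log (Real.cosh x) - x * Real.sinh x / Real.cosh x) _ x :=
    h1.sub h3
  convert h using 1
  have hc := (Real.cosh_pos x).ne'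
  have hsq : Real.cosh x ^ 2 - Real.sinh x ^ 2 = 1 := Real.cosh_sq_sub_sinh_sq x
  field_simp
  linear_combination x * hsq

private lemma aux_ineq {x : ℝ} (hx : 0 ≤ x) :
    x * Real.sinh x / Real.cosh x ≤ 2 * Real.log (Real.cosh x) := by
  set g : ℝ → ℝ := fun x => 2 * Real.log (Real.cosh x) - x * Real.sinh x / Real.cosh x with hg
  have hmono : MonotoneOn g (Set.Ici (0 : ℝ)) := by
    apply monotoneOn_of_deriv_nonneg (convex_Ici 0)
    · exact fun y _ => ((hasDerivAt_g y).continuousAt).continuousWithinAt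
    · exact fun y _ => ((hasDerivAt_g y).differentiableAt).differentiableWithinAt
    · intro y hy
      rw [interior_Ici] at hy
      rw [(hasDerivAt_g y).deriv]
      apply div_nonneg _ (sq_nonneg _)
      have h1 : y < Real.sinh y := Real.self_lt_sinh_iff.mpr hy
      have h2 : 1 ≤ Real.cosh y := Real.one_le_cosh y
      have h0 : (0:ℝ) < y := hy
      have h3 : Real.sinh y * 1 ≤ Real.sinh y * Real.cosh y :=
        mul_le_mul_of_nonneg_left h2 (h0.trans h1).le
      linarith
  have h0 : g 0 ≤ g x := hmono Set.self_mem_Ici hx hx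
  simp [hg, Real.cosh_zero, Real.log_one] at h0
  linarith

/-- The function `r ↦ log(cosh r)/r²` is antitone on `(0,∞)`; consequently
`log(cosh r)/log(cosh δ) ≤ r²/δ²` for `0 < δ ≤ r`. -/
theorem log_cosh_div_sq_antitone :
    AntitoneOn (fun r : ℝ => Real.log (Real.cosh r) / r ^ 2) (Set.Ioi (0 : ℝ)) ∧
    ∀ δ r : ℝ, 0 < δ → δ ≤ r →
      Real.log (Real.cosh r) / Real.log (Real.cosh δ) ≤ r ^ 2 / δ ^ 2 := by
  have hderiv : ∀ x : ℝ, x ≠ 0 → HasDerivAt (fun r : ℝ => Real.log (Real.cosh r) / r ^ 2)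
      (((Real.cosh x)⁻¹ * Real.sinh x * x ^ 2 - Real.log (Real.cosh x) * (2 * x ^ 1))
        / (x ^ 2) ^ 2) x := by
    intro x hx
    exact (hasDerivAt_logcosh x).div (hasDerivAt_pow 2 x) (pow_ne_zero 2 hx)
  have hanti : AntitoneOn (fun r : ℝ => Real.log (Real.cosh r) / r ^ 2) (Set.Ioi (0 : ℝ)) := by
    apply antitoneOn_of_deriv_nonpos (convex_Ioi 0)
    · exact fun y hy => ((hderiv y (ne_of_gt hy)).continuousAt).continuousWithinAt
    · intro y hy
      rw [interior_Ioi] at hy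
      exact ((hderiv y (ne_of_gt hy)).differentiableAt).differentiableWithinAt
    · intro y hy
      rw [interior_Ioi] at hy
      rw [(hderiv y (ne_of_gt hy)).deriv]
      apply div_nonpos_of_nonpos_of_nonneg _ (sq_nonneg _)
      have h1 := aux_ineq hy.le
      have hc := (Real.cosh_pos y).ne'
      have : (Real.cosh y)⁻¹ * Real.sinh y * y ^ 2
          = (y * Real.sinh y / Real.cosh y) * y := by field_simp
      rw [this]
      have h2 : (y * Real.sinh y / Real.cosh y) * y ≤ (2 * Real.log (Real.cosh y)) * y :=
        mul_le_mul_of_nonneg_right h1 hy.le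
      calc (y * Real.sinh y / Real.cosh y) * y - Real.log (Real.cosh y) * (2 * y ^ 1)
          ≤ (2 * Real.log (Real.cosh y)) * y - Real.log (Real.cosh y) * (2 * y ^ 1) := by linarith
        _ = 0 := by ring
  refine ⟨hanti, fun δ r hδ hδr => ?_⟩
  have hr : 0 < r := lt_of_lt_of_le hδ hδr
  have h := hanti (Set.mem_Ioi.mpr hδ) (Set.mem_Ioi.mpr hr) hδr
  have hlogδ : 0 < Real.log (Real.cosh δ) :=
    Real.log_pos (Real.one_lt_cosh.mpr hδ.ne')
  have hδ2 : (0:ℝ) < δ ^ 2 := by positivity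
  have hr2 : (0:ℝ) < r ^ 2 := by positivity
  rw [div_le_div_iff₀ hr2 hδ2] at h
  rw [div_le_div_iff₀ hlogδ hδ2]
  nlinarith
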